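/- For a two-point flux differencing scheme based on a symmetric two-point flux F# with consistency F#(q,q) = F(q) and a derivative matrix D with diagonal mass matrix M = diag(ω_0, ..., ω_N) and SBP property MD + (MD)ᵀ = diag(-1,0,...,0,1), the quadrature-weighted sum of the flux differencing terms telescopes to boundary terms: ∑_{i=0}^{N} ω_i (2 ∑_{n=0}^{N} D_{in} F#(q_i, q_n)) = F(q_N) − F(q_0). -/
import Mathlib


open Matrix

theorem flux_differencing_telescoping (N : ℕ) (hN : 1 ≤ N)
    (ω : Fin (N+1) → ℝ) (hω : ∀ i, ω i ≠ 0)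
    (D : Matrix (Fin (N+1)) (Fin (N+1)) ℝ)
    (hSBP : Matrix.diagonal ω * D + (Matrix.diagonal ω * D)ᵀ =
      Matrix.diagonal (fun i =>
        if i = 0 then (-1 : ℝ) else if i = Fin.last N then 1 else 0))
    (Fnum : ℝ → ℝ → ℝ) (hsym : ∀ a b, Fnum a b = Fnum b a)
    (F : ℝ → ℝ) (hcons : ∀ q, Fnum q q = F q)
    (q : Fin (N+1) → ℝ) :
    (∑ i, ω i * (2 * ∑ n, D i n * Fnum (q i) (q n))) =
      F (q (Fin.last N)) - F (q 0) := by
  have h0 : (0 : Fin (N+1)) ≠ Fin.last N := by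
    intro h
    have := congrArg Fin.val h
    simp only [Fin.val_last, Fin.val_zero] at this
    omega
  have hB : ∀ i n : Fin (N+1), ω i * D i n + ω n * D n i =
      if i = n then (if i = 0 then (-1:ℝ) else if i = Fin.last N then 1 else 0) else 0 := by
    intro i n
    have h := congrFun (congrFun hSBP i) n
    simp only [Matrix.add_apply, Matrix.transpose_apply, Matrix.diagonal_mul,
      Matrix.diagonal_apply] at h
    linear_combination h
  have hswap : ∑ i, ∑ n, (ω n * D n i) * Fnum (q i) (q n)
      = ∑ i, ∑ n, (ω i * D i n) * Fnum (q i) (q n) := by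
    rw [Finset.sum_comm]
    exact Finset.sum_congr rfl fun i _ => Finset.sum_congr rfl fun n _ => by rw [hsym]
  have key : (∑ i, ω i * (2 * ∑ n, D i n * Fnum (q i) (q n)))
      = ∑ i, ∑ n, (ω i * D i n + ω n * D n i) * Fnum (q i) (q n) := by
    simp only [add_mul, Finset.sum_add_distrib, hswap, Finset.mul_sum]
    ring_nf
    simp [Finset.sum_mul]
  rw [key]
  have key2 : ∀ i : Fin (N+1), (∑ n, (ω i * D i n + ω n * D n i) * Fnum (q i) (q n))
      = (if i = 0 then (-1:ℝ) else if i = Fin.last N then 1 else 0) * F (q i) := by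
    intro i
    rw [← hcons (q i)]
    calc (∑ n, (ω i * D i n + ω n * D n i) * Fnum (q i) (q n))
        = ∑ n, (if i = n then ((if i = 0 then (-1:ℝ) else if i = Fin.last N then 1 else 0) * Fnum (q i) (q n)) else 0) := by
          refine Finset.sum_congr rfl fun n _ => ?_
          rw [hB i n]
          split <;> simp
      _ = (if i = 0 then (-1:ℝ) else if i = Fin.last N then 1 else 0) * Fnum (q i) (q i) := by
          rw [Finset.sum_ite_eq]; simp
  simp only [key2]
  have hsplit : ∀ i : Fin (N+1),
      (if i = 0 then (-1:ℝ) else if i = Fin.last N then 1 else 0) * F (q i)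
      = (if i = 0 then -F (q 0) else 0) + (if i = Fin.last N then F (q (Fin.last N)) else 0) := by
    intro i
    by_cases h1 : i = 0
    · subst h1; simp [h0, Ne.symm h0]
    · by_cases h2 : i = Fin.last N
      · subst h2; simp [h1]
      · simp [h1, h2]
  simp only [hsplit, Finset.sum_add_distrib, Finset.sum_ite_eq, Finset.sum_ite_eq', Finset.mem_univ, if_true]
  ring
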